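/- (Theorem 3.1, non-asymptotic confidence interval.) Let ξ₁,…,ξ_N be i.i.d. samples from P* on a probability space, let P̂_N be their (random) empirical measure, let τ_ε := (1+ε)·inf_{x∈𝒳} E_{P̂_N}[h(x,ξ)] (a random variable, assumed a.s. finite), and let (x̂_N, k̂_N) be a (random) pair that is almost surely RS-feasible for τ_ε with respect to P̂_N. Suppose r_N > 0 and β_N ∈ (0,1) satisfy P{ d_W(P*, P̂_N) > r_N } ≤ β_N. Then with probability at least 1 − β_N: −L·r_N + τ_ε/(1+ε) ≤ J* ≤ E_{P*}[h(x̂_N,ξ)] ≤ k̂_N·r_N + τ_ε, where J* := inf_{x∈𝒳} E_{P*}[h(x,ξ)]. -/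

import Mathlib

open MeasureTheory

noncomputable section

abbrev Vec (m : ℕ) := EuclideanSpace ℝ (Fin m)

/-- A coupling of two Borel probability measures on `Vec m`. -/
def IsCoupling {m : ℕ} (γ : Measure (Vec m × Vec m)) (P Q : Measure (Vec m)) : Prop :=
  IsProbabilityMeasure γ ∧ γ.map Prod.fst = P ∧ γ.map Prod.snd = Q

/-- Type-1 Wasserstein distance: infimum of `∫ ‖ξ₁ - ξ₂‖₂ dγ` over couplings `γ`. -/
noncomputable def wDist {m : ℕ} (P Q : Measure (Vec m)) : ℝ :=
  sInf {c : ℝ | ∃ γ : Measure (Vec m × Vec m), IsCoupling γ P Q ∧ c = ∫ p, ‖p.1 - p.2‖ ∂γ}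

/-- `(x, k)` is RS-feasible for reference value `τ` with respect to `Phat`. -/
def RSFeasible {m : ℕ} {X : Type*} (h : X → Vec m → ℝ)
    (Phat : Measure (Vec m)) (τ : ℝ) (x : X) (k : ℝ) : Prop :=
  0 ≤ k ∧ ∀ P : Measure (Vec m), IsProbabilityMeasure P →
    Integrable (fun ξ => ‖ξ‖) P → (∫ ξ, h x ξ ∂P) - τ ≤ k * wDist P Phat

/-- Empirical measure `(1/N) ∑ δ_{x i}`. -/
noncomputable def empMeas {m N : ℕ} (xs : Fin N → Vec m) : Measure (Vec m) :=
  (N : ENNReal)⁻¹ • ∑ i : Fin N, Measure.dirac (xs i)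

/-!
On the event `d_W(P*, P̂_N) ≤ r_N`, whose probability is at least `1 - β_N`, the bounds are
deterministic. Integrating the Lipschitz bound against any coupling shows that `L`-Lipschitz
expectations under `P*` and `P̂_N` differ by at most `L · d_W(P*, P̂_N) ≤ L r_N`, which moves the
infimum over `𝒳` by at most `L r_N`; RS-feasibility tested at `P = P*` gives the upper bound.
-/

section Empirical

variable {m N : ℕ}

lemma isProbabilityMeasure_empMeas (hN : 0 < N) (xs : Fin N → Vec m) :
    IsProbabilityMeasure (empMeas xs) := by
  constructor
  simp only [empMeas, Measure.smul_apply, Measure.finsetSum_apply, measure_univ,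
    Finset.sum_const, Finset.card_univ, Fintype.card_fin, nsmul_eq_mul, mul_one, smul_eq_mul]
  exact ENNReal.inv_mul_cancel (by exact_mod_cast hN.ne') (ENNReal.natCast_ne_top N)

lemma integrable_empMeas (hN : 0 < N) (f : Vec m → ℝ) (xs : Fin N → Vec m) :
    Integrable f (empMeas xs) :=
  (integrable_finsetSum_measure.2 fun _ _ => integrable_dirac enorm_lt_top).smul_measure
    (ENNReal.inv_ne_top.2 (by exact_mod_cast hN.ne'))

end Empirical

section Kantorovich

variable {m : ℕ} {P Q : Measure (Vec m)} {f : Vec m → ℝ} {L : ℝ}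

lemma isCoupling_prod [IsProbabilityMeasure P] [IsProbabilityMeasure Q] :
    IsCoupling (P.prod Q) P Q :=
  ⟨inferInstance, Measure.fst_prod, Measure.snd_prod⟩

lemma IsCoupling.integrable_cost {γ : Measure (Vec m × Vec m)} (hγ : IsCoupling γ P Q)
    (hP : Integrable (fun ξ => ‖ξ‖) P) (hQ : Integrable (fun ξ => ‖ξ‖) Q) :
    Integrable (fun p => ‖p.1 - p.2‖) γ := by
  obtain ⟨-, rfl, rfl⟩ := hγ
  have hid (ν : Measure (Vec m)) (hν : Integrable (fun ξ => ‖ξ‖) ν) : Integrable id ν :=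
    (integrable_norm_iff aestronglyMeasurable_id).1 hν
  exact (((hid _ hP).comp_measurable measurable_fst).sub
    ((hid _ hQ).comp_measurable measurable_snd)).norm

lemma IsCoupling.abs_integral_sub_le {γ : Measure (Vec m × Vec m)} (hγ : IsCoupling γ P Q)
    (hPmom : Integrable (fun ξ => ‖ξ‖) P) (hQmom : Integrable (fun ξ => ‖ξ‖) Q)
    (hLip : ∀ ξ η, |f ξ - f η| ≤ L * ‖ξ - η‖) (hfP : Integrable f P) (hfQ : Integrable f Q) :
    |(∫ ξ, f ξ ∂P) - ∫ ξ, f ξ ∂Q| ≤ L * ∫ p, ‖p.1 - p.2‖ ∂γ := by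
  have hcost := hγ.integrable_cost hPmom hQmom
  obtain ⟨-, rfl, rfl⟩ := hγ
  have hf₁ : Integrable (fun p => f p.1) γ := hfP.comp_measurable measurable_fst
  have hf₂ : Integrable (fun p => f p.2) γ := hfQ.comp_measurable measurable_snd
  rw [integral_map measurable_fst.aemeasurable hfP.1,
    integral_map measurable_snd.aemeasurable hfQ.1, ← integral_sub hf₁ hf₂,
    ← integral_const_mul]
  exact abs_integral_le_integral_abs.trans
    (integral_mono (hf₁.sub hf₂).abs (hcost.const_mul L) fun p => hLip p.1 p.2)

lemma abs_integral_sub_le_mul_wDist [IsProbabilityMeasure P] [IsProbabilityMeasure Q]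
    (hPmom : Integrable (fun ξ => ‖ξ‖) P) (hQmom : Integrable (fun ξ => ‖ξ‖) Q) (hL : 0 ≤ L)
    (hLip : ∀ ξ η, |f ξ - f η| ≤ L * ‖ξ - η‖) (hfP : Integrable f P) (hfQ : Integrable f Q) :
    |(∫ ξ, f ξ ∂P) - ∫ ξ, f ξ ∂Q| ≤ L * wDist P Q := by
  rw [wDist, ← smul_eq_mul, ← Real.sInf_smul_of_nonneg hL]
  refine le_csInf (Set.Nonempty.smul_set ⟨_, _, isCoupling_prod, rfl⟩) ?_
  rintro _ ⟨_, ⟨γ, hγ, rfl⟩, rfl⟩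
  exact hγ.abs_integral_sub_le hPmom hQmom hLip hfP hfQ

end Kantorovich

lemma RSFeasible.integral_le_of_wDist_le {m : ℕ} {X : Type*} {h : X → Vec m → ℝ}
    {Q : Measure (Vec m)} {τ : ℝ} {x : X} {k r : ℝ} (hfeas : RSFeasible h Q τ x k)
    {P : Measure (Vec m)} [IsProbabilityMeasure P] (hP : Integrable (fun ξ => ‖ξ‖) P)
    (hPQ : wDist P Q ≤ r) :
    ∫ ξ, h x ξ ∂P ≤ k * r + τ := by
  linarith [hfeas.2 P inferInstance hP, mul_le_mul_of_nonneg_left hPQ hfeas.1]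

lemma confidence_bounds_of_wDist_le {m : ℕ} {X : Type*} [Nonempty X] {h : X → Vec m → ℝ}
    {L : ℝ} (hL : 0 ≤ L) (hLip : ∀ x ξ η, |h x ξ - h x η| ≤ L * ‖ξ - η‖)
    (hInt : ∀ x (P : Measure (Vec m)), IsProbabilityMeasure P →
      Integrable (fun ξ => ‖ξ‖) P → Integrable (h x) P)
    {P Q : Measure (Vec m)} [IsProbabilityMeasure P] [IsProbabilityMeasure Q]
    (hPmom : Integrable (fun ξ => ‖ξ‖) P) (hQmom : Integrable (fun ξ => ‖ξ‖) Q)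
    (hbdd : BddBelow (Set.range fun x => ∫ ξ, h x ξ ∂Q))
    {τ : ℝ} {x : X} {k : ℝ} (hfeas : RSFeasible h Q τ x k) {r : ℝ} (hPQ : wDist P Q ≤ r) :
    -L * r + (⨅ x, ∫ ξ, h x ξ ∂Q) ≤ (⨅ x, ∫ ξ, h x ξ ∂P) ∧
      (⨅ x, ∫ ξ, h x ξ ∂P) ≤ (∫ ξ, h x ξ ∂P) ∧ (∫ ξ, h x ξ ∂P) ≤ k * r + τ := by
  have hclose (y : X) : |(∫ ξ, h y ξ ∂P) - ∫ ξ, h y ξ ∂Q| ≤ L * r :=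
    (abs_integral_sub_le_mul_wDist hPmom hQmom hL (hLip y) (hInt y P ‹_› hPmom)
      (hInt y Q ‹_› hQmom)).trans (mul_le_mul_of_nonneg_left hPQ hL)
  have hlower (y : X) : (⨅ x, ∫ ξ, h x ξ ∂Q) - L * r ≤ ∫ ξ, h y ξ ∂P := by
    linarith [ciInf_le hbdd y, (abs_le.1 (hclose y)).1]
  exact ⟨by linarith [le_ciInf hlower], ciInf_le ⟨_, Set.forall_mem_range.2 hlower⟩ x,
    hfeas.integral_le_of_wDist_le hPmom hPQ⟩

lemma ofReal_one_sub_le_measure_of_ae_notMem_imp {Ω : Type*} [MeasurableSpace Ω]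
    {μ : Measure Ω} [IsProbabilityMeasure μ] {A B : Set Ω} {β : ℝ} (hβ : 0 ≤ β)
    (hA : μ A ≤ ENNReal.ofReal β) (hAB : ∀ᵐ ω ∂μ, ω ∉ A → ω ∈ B) :
    ENNReal.ofReal (1 - β) ≤ μ B :=
  calc ENNReal.ofReal (1 - β) = 1 - ENNReal.ofReal β := by
        rw [ENNReal.ofReal_sub 1 hβ, ENNReal.ofReal_one]
    _ ≤ 1 - μ A := tsub_le_tsub_left hA 1
    _ ≤ μ Aᶜ := tsub_le_iff_left.2 (by simpa using measure_univ_le_add_compl (μ := μ) A)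
    _ ≤ μ B := measure_mono_ae (hAB.mono fun _ h hω => h hω)

theorem confidence_interval_optimal_loss_general {m N : ℕ} (hN : 0 < N)
    {X : Type*} [Nonempty X]
    {Ω : Type*} [MeasurableSpace Ω] (μ : Measure Ω) [IsProbabilityMeasure μ]
    (h : X → Vec m → ℝ) (L : ℝ) (hL : 0 ≤ L)
    (hLip : ∀ x ξ η, |h x ξ - h x η| ≤ L * ‖ξ - η‖)
    (hInt : ∀ x (P : Measure (Vec m)), IsProbabilityMeasure P →
      Integrable (fun ξ => ‖ξ‖) P → Integrable (h x) P)
    (Pstar : Measure (Vec m)) [IsProbabilityMeasure Pstar]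
    (hPstarmom : Integrable (fun ξ => ‖ξ‖) Pstar)
    -- i.i.d. samples from Pstar
    (ξs : Fin N → Ω → Vec m)
    -- empirical measure
    (Phat : Ω → Measure (Vec m)) (hPhat : ∀ ω, Phat ω = empMeas (fun i => ξs i ω))
    -- reference value
    (ε : ℝ) (hε : 0 < ε)
    (τ : Ω → ℝ) (hτ : ∀ ω, τ ω = (1 + ε) * ⨅ x, ∫ ξ, h x ξ ∂(Phat ω))
    (hfin : ∀ᵐ ω ∂μ, BddBelow (Set.range fun x => ∫ ξ, h x ξ ∂(Phat ω)))
    -- almost surely RS-feasible random pair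
    (xhat : Ω → X) (khat : Ω → ℝ)
    (hfeas : ∀ᵐ ω ∂μ, RSFeasible h (Phat ω) (τ ω) (xhat ω) (khat ω))
    -- concentration of the empirical measure
    (r β : ℝ) (hβ0 : 0 < β)
    (htail : μ {ω | r < wDist Pstar (Phat ω)} ≤ ENNReal.ofReal β) :
    ENNReal.ofReal (1 - β) ≤
      μ {ω | -L * r + τ ω / (1 + ε) ≤ (⨅ x, ∫ ξ, h x ξ ∂Pstar) ∧
             (⨅ x, ∫ ξ, h x ξ ∂Pstar) ≤ (∫ ξ, h (xhat ω) ξ ∂Pstar) ∧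
             (∫ ξ, h (xhat ω) ξ ∂Pstar) ≤ khat ω * r + τ ω} := by
  refine ofReal_one_sub_le_measure_of_ae_notMem_imp hβ0.le htail ?_
  filter_upwards [hfin, hfeas] with ω hbdd hfeasω hnear
  have : IsProbabilityMeasure (Phat ω) := hPhat ω ▸ isProbabilityMeasure_empMeas hN _
  have hτω : τ ω / (1 + ε) = ⨅ x, ∫ ξ, h x ξ ∂(Phat ω) := by
    rw [hτ ω, mul_div_cancel_left₀ _ (by linarith)]
  rw [hτω]
  exact confidence_bounds_of_wDist_le hL hLip hInt hPstarmom
    (hPhat ω ▸ integrable_empMeas hN _ _) hbdd hfeasω (not_lt.1 hnear)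

/-- Theorem 3.1, non-asymptotic confidence interval: with probability
at least 1 - beta_N, -L r_N + tau_eps/(1+eps) <= J* <= E_{P*}[h(xhat_N,.)] <= khat_N r_N + tau_eps. -/
theorem confidence_interval_optimal_loss {m N : ℕ} (hN : 0 < N)
    {X : Type*} [Nonempty X]
    {Ω : Type*} [MeasurableSpace Ω] (μ : Measure Ω) [IsProbabilityMeasure μ]
    (h : X → Vec m → ℝ) (L : ℝ) (hL : 0 ≤ L)
    (hLip : ∀ x ξ η, |h x ξ - h x η| ≤ L * ‖ξ - η‖)
    (hInt : ∀ x (P : Measure (Vec m)), IsProbabilityMeasure P →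
      Integrable (fun ξ => ‖ξ‖) P → Integrable (h x) P)
    (Pstar : Measure (Vec m)) [IsProbabilityMeasure Pstar]
    (hPstarmom : Integrable (fun ξ => ‖ξ‖) Pstar)
    -- i.i.d. samples from Pstar
    (ξs : Fin N → Ω → Vec m) (hmeas : ∀ i, Measurable (ξs i))
    (hindep : ProbabilityTheory.iIndepFun ξs μ)
    (hdist : ∀ i, μ.map (ξs i) = Pstar)
    -- empirical measure
    (Phat : Ω → Measure (Vec m)) (hPhat : ∀ ω, Phat ω = empMeas (fun i => ξs i ω))
    -- reference value
    (ε : ℝ) (hε : 0 < ε)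
    (τ : Ω → ℝ) (hτ : ∀ ω, τ ω = (1 + ε) * ⨅ x, ∫ ξ, h x ξ ∂(Phat ω))
    (hfin : ∀ᵐ ω ∂μ, BddBelow (Set.range fun x => ∫ ξ, h x ξ ∂(Phat ω)))
    -- almost surely RS-feasible random pair
    (xhat : Ω → X) (khat : Ω → ℝ)
    (hfeas : ∀ᵐ ω ∂μ, RSFeasible h (Phat ω) (τ ω) (xhat ω) (khat ω))
    -- concentration of the empirical measure
    (r β : ℝ) (hr : 0 < r) (hβ0 : 0 < β) (hβ1 : β < 1)
    (htail : μ {ω | r < wDist Pstar (Phat ω)} ≤ ENNReal.ofReal β) :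
    ENNReal.ofReal (1 - β) ≤
      μ {ω | -L * r + τ ω / (1 + ε) ≤ (⨅ x, ∫ ξ, h x ξ ∂Pstar) ∧
             (⨅ x, ∫ ξ, h x ξ ∂Pstar) ≤ (∫ ξ, h (xhat ω) ξ ∂Pstar) ∧
             (∫ ξ, h (xhat ω) ξ ∂Pstar) ≤ khat ω * r + τ ω} :=
  confidence_interval_optimal_loss_general hN μ h L hL hLip hInt Pstar hPstarmom ξs Phat hPhat ε hε
    τ hτ hfin xhat khat hfeas r β hβ0 htail
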